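/- Let ι be a fixed-point-free involution of {1,…,2n}. Then the set {w ∈ S_{2n} : w⁻¹ ∘ J̄_n ∘ w = ι} is nonempty, and the minimum of l(w) over this set equals c(ι) + 2·r(ι) = (l(ι) − n)/2. (The minimizers are the pair permutations of ι.) -/

import Mathlib

/-- A fixed-point-free involution. -/
def isFPF {m : ℕ} (ι : Equiv.Perm (Fin m)) : Prop :=
  ι * ι = 1 ∧ ∀ i, ι i ≠ i

/-- The length (number of inversions) of a permutation of `Fin m`. -/
def invLength {m : ℕ} (π : Equiv.Perm (Fin m)) : ℕ :=
  Finset.card (Finset.univ.filter fun p : Fin m × Fin m => p.1 < p.2 ∧ π p.2 < π p.1)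

/-- The number of crossing pairs of arcs `a < b < ι a < ι b` of a fixed-point-free
involution (the number of countryside involutions contained in it). -/
def crossings {m : ℕ} (ι : Equiv.Perm (Fin m)) : ℕ :=
  Finset.card (Finset.univ.filter fun p : Fin m × Fin m =>
    p.1 < p.2 ∧ p.2 < ι p.1 ∧ ι p.1 < ι p.2)

/-- The number of nesting pairs of arcs `a < b < ι b < ι a` of a fixed-point-free
involution (the number of rainbow involutions contained in it). -/
def nestings {m : ℕ} (ι : Equiv.Perm (Fin m)) : ℕ :=
  Finset.card (Finset.univ.filter fun p : Fin m × Fin m =>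
    p.1 < p.2 ∧ p.2 < ι p.2 ∧ ι p.2 < ι p.1)

/-- The fixed-point-free involution `J̄ₙ = 2143⋯(2n)(2n−1)`, in 0-based indexing:
it swaps `2k ↔ 2k+1`. -/
def Jbar (n : ℕ) : Equiv.Perm (Fin (2*n)) where
  toFun i := ⟨2*(i.val/2) + (1 - i.val % 2), by have := i.isLt; omega⟩
  invFun i := ⟨2*(i.val/2) + (1 - i.val % 2), by have := i.isLt; omega⟩
  left_inv i := by apply Fin.ext; simp only; omega
  right_inv i := by apply Fin.ext; simp only; omega

/-!
For every `w` with `w⁻¹ J̄ₙ w = ι`, subadditivity of the length and `l(w⁻¹) = l(w)` give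
`l(ι) ≤ l(J̄ₙ) + 2 l(w) = n + 2 l(w)`. Counting inversions of `ι` arc by arc, each arc is one
inversion and two arcs add 0, 2 or 4 more according as they are disjoint, crossing or nested, so
`l(ι) = n + 2 (c + 2 r)`. The bound is attained by the `w` whose inverse sends `2k` and `2k + 1` to
the endpoints of the `k`-th arc (arcs ordered by their left endpoints): its inversions are the
pairs of arcs of which the second starts inside the first, counted twice when they are nested,
so `l(w) = c + 2 r`.
-/

open Finset

section Length

variable {m : ℕ}

def inversions (π : Equiv.Perm (Fin m)) : Finset (Fin m × Fin m) :=
  univ.filter fun p => p.1 < p.2 ∧ π p.2 < π p.1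

@[simp]
theorem mem_inversions {π : Equiv.Perm (Fin m)} {p : Fin m × Fin m} :
    p ∈ inversions π ↔ p.1 < p.2 ∧ π p.2 < π p.1 := by
  simp [inversions]

theorem invLength_eq_card_inversions (π : Equiv.Perm (Fin m)) :
    invLength π = #(inversions π) := rfl

theorem invLength_inv (π : Equiv.Perm (Fin m)) : invLength π⁻¹ = invLength π := by
  rw [invLength_eq_card_inversions, invLength_eq_card_inversions]
  refine card_equiv ((Equiv.prodComm _ _).trans (π⁻¹.prodCongr π⁻¹)) fun p => ?_
  simp [and_comm]

theorem invLength_mul_le (σ τ : Equiv.Perm (Fin m)) :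
    invLength (σ * τ) ≤ invLength σ + invLength τ := by
  simp only [invLength_eq_card_inversions]
  have hsub : inversions (σ * τ) ⊆
      (inversions σ).map (τ⁻¹.prodCongr τ⁻¹).toEmbedding ∪ inversions τ := by
    intro p hp
    rw [mem_inversions, Equiv.Perm.mul_apply, Equiv.Perm.mul_apply] at hp
    rcases lt_or_gt_of_ne (τ.injective.ne hp.1.ne) with h | h
    · exact mem_union_left _ (by simpa [mem_map_equiv] using ⟨h, hp.2⟩)
    · exact mem_union_right _ (mem_inversions.2 ⟨hp.1, h⟩)
  calc #(inversions (σ * τ)) ≤ _ := card_le_card hsub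
    _ ≤ _ := card_union_le _ _
    _ = _ := by rw [card_map]

theorem invLength_conj_le (π v : Equiv.Perm (Fin m)) :
    invLength (v⁻¹ * π * v) ≤ invLength π + 2 * invLength v :=
  calc invLength (v⁻¹ * π * v) ≤ invLength v⁻¹ + invLength π + invLength v :=
        (invLength_mul_le _ _).trans (Nat.add_le_add_right (invLength_mul_le _ _) _)
    _ = invLength π + 2 * invLength v := by rw [invLength_inv]; ring

end Length

theorem card_eq_card_filter_lt_add_card_filter_eq_add_card_filter_gt {α β : Type*}
    [LinearOrder β] (s : Finset α) (f g : α → β) :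
    #s = #(s.filter fun a => f a < g a) + #(s.filter fun a => f a = g a) +
      #(s.filter fun a => g a < f a) := by
  rw [← card_filter_add_card_filter_not (s := s) (fun a => f a < g a), add_assoc,
    ← card_filter_add_card_filter_not (s := s.filter fun a => ¬ f a < g a) (fun a => f a = g a),
    filter_filter, filter_filter]
  congr 3 <;> apply filter_congr <;> intro a _
  · exact ⟨And.right, fun h => ⟨h.not_lt, h⟩⟩
  · rw [not_lt, ← ne_eq]
    exact ⟨fun h => lt_of_le_of_ne h.1 h.2.symm, fun h => ⟨h.le, h.ne'⟩⟩

section Involution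

variable {m : ℕ} {ι : Equiv.Perm (Fin m)}

theorem isFPF.apply_apply (hι : isFPF ι) (x : Fin m) : ι (ι x) = x := by
  simpa using Equiv.Perm.ext_iff.1 hι.1 x

def openers (ι : Equiv.Perm (Fin m)) : Finset (Fin m) :=
  univ.filter fun i => i < ι i

@[simp]
theorem mem_openers {i : Fin m} : i ∈ openers ι ↔ i < ι i := by
  simp [openers]

theorem isFPF.apply_mem_openers_iff (hι : isFPF ι) {i : Fin m} :
    ι i ∈ openers ι ↔ i ∉ openers ι := by
  rw [mem_openers, mem_openers, hι.apply_apply, not_lt]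
  exact ⟨le_of_lt, fun h => lt_of_le_of_ne h (hι.2 i)⟩

theorem isFPF.card_openers (hι : isFPF ι) : 2 * #(openers ι) = m := by
  have hcompl : (openers ι)ᶜ = (openers ι).map ι.toEmbedding := by
    ext i
    rw [mem_compl, mem_map_equiv, ← hι.apply_mem_openers_iff, ← Equiv.Perm.inv_def,
      inv_eq_of_mul_eq_one_right hι.1]
  have := card_add_card_compl (openers ι)
  rw [hcompl, card_map, Fintype.card_fin] at this
  omega

/-- Pairs of arcs `(a, ι a)`, `(b, ι b)` with `a < b < ι a`: the crossing and the nesting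
ones. -/
def overlapPairs (ι : Equiv.Perm (Fin m)) : Finset (Fin m × Fin m) :=
  univ.filter fun p => p.1 < p.2 ∧ p.2 < ι p.1 ∧ p.2 < ι p.2

@[simp]
theorem mem_overlapPairs {p : Fin m × Fin m} :
    p ∈ overlapPairs ι ↔ p.1 < p.2 ∧ p.2 < ι p.1 ∧ p.2 < ι p.2 := by
  simp [overlapPairs]

theorem card_overlapPairs (ι : Equiv.Perm (Fin m)) :
    #(overlapPairs ι) = crossings ι + nestings ι := by
  rw [crossings, nestings, ← card_filter_add_card_filter_not (s := overlapPairs ι)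
    (fun p => ι p.1 < ι p.2)]
  congr 2 <;> ext p <;> simp only [mem_filter, mem_overlapPairs, mem_univ, true_and]
  · exact ⟨fun ⟨⟨h1, h2, _⟩, h3⟩ => ⟨h1, h2, h3⟩,
      fun ⟨h1, h2, h3⟩ => ⟨⟨h1, h2, h2.trans h3⟩, h3⟩⟩
  · refine ⟨fun ⟨⟨h1, _, h2⟩, h3⟩ => ⟨h1, h2, lt_of_le_of_ne (not_lt.1 h3) ?_⟩,
      fun ⟨h1, h2, h3⟩ => ⟨⟨h1, h2.trans h3, h2⟩, not_lt.2 h3.le⟩⟩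
    exact fun h => h1.ne (ι.injective h).symm

theorem isFPF.card_filter_inversions_eq_apply (hι : isFPF ι) :
    #((inversions ι).filter fun p => p.1 = ι p.2) = #(openers ι) := by
  refine card_nbij' Prod.fst (fun a => (a, ι a)) ?_ ?_ ?_ ?_
  · rintro ⟨a, b⟩ hab
    simp only [mem_coe, mem_filter, mem_inversions] at hab
    simpa [hab.2, hι.apply_apply] using hab.1.1
  · intro a ha
    simp only [mem_coe, mem_openers] at ha
    simpa [hι.apply_apply] using ha
  · rintro ⟨a, b⟩ hab
    simp only [mem_coe, mem_filter, mem_inversions] at hab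
    simp [hab.2, hι.apply_apply]
  · intro a _
    rfl

theorem isFPF.card_filter_inversions_apply_lt (hι : isFPF ι) :
    #((inversions ι).filter fun p => ι p.2 < p.1) =
      #((inversions ι).filter fun p => p.1 < ι p.2) := by
  refine card_equiv ((Equiv.prodComm _ _).trans (ι.prodCongr ι)) fun p => ?_
  simp only [mem_filter, mem_inversions, Equiv.trans_apply, Equiv.prodComm_apply,
    Prod.fst_swap, Prod.snd_swap, Equiv.prodCongr_apply, Prod.map_fst, Prod.map_snd,
    hι.apply_apply]
  tauto

theorem isFPF.card_filter_inversions_lt_apply (hι : isFPF ι) :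
    #((inversions ι).filter fun p => p.1 < ι p.2) = nestings ι + #(overlapPairs ι) := by
  rw [nestings, ← card_filter_add_card_filter_not (fun p => p.2 < ι p.2), filter_filter,
    filter_filter]
  congr 1
  · congr 1
    ext p
    simp only [mem_filter, mem_inversions, mem_univ, true_and]
    exact ⟨fun ⟨⟨h1, h2⟩, _, h3⟩ => ⟨h1, h3, h2⟩,
      fun ⟨h1, h2, h3⟩ => ⟨⟨h1, h3⟩, h1.trans h2, h2⟩⟩
  · refine card_equiv ((Equiv.refl _).prodCongr ι) fun p => ?_
    simp only [mem_filter, mem_inversions, mem_overlapPairs, Equiv.prodCongr_apply,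
      Prod.map_fst, Prod.map_snd, Equiv.refl_apply, hι.apply_apply, not_lt]
    exact ⟨fun ⟨⟨_, h1⟩, h2, h3⟩ => ⟨h2, h1, lt_of_le_of_ne h3 (hι.2 p.2)⟩,
      fun ⟨h1, h2, h3⟩ => ⟨⟨h1.trans h3, h2⟩, h1, h3.le⟩⟩

theorem isFPF.invLength_eq (hι : isFPF ι) :
    invLength ι = #(openers ι) + 2 * (#(overlapPairs ι) + nestings ι) := by
  rw [invLength_eq_card_inversions, card_eq_card_filter_lt_add_card_filter_eq_add_card_filter_gt
    (inversions ι) Prod.fst (fun p => ι p.2), hι.card_filter_inversions_eq_apply,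
    hι.card_filter_inversions_apply_lt, hι.card_filter_inversions_lt_apply]
  ring

end Involution

section Pairing

variable {n : ℕ} {ι : Equiv.Perm (Fin (2 * n))}

def half (i : Fin (2 * n)) : Fin n := ⟨i / 2, by omega⟩

@[simp]
theorem val_half (i : Fin (2 * n)) : (half i).val = i.val / 2 := rfl

theorem half_mono : Monotone (half : Fin (2 * n) → Fin n) := fun i j h => by
  simp only [Fin.le_def, val_half] at h ⊢
  omega

theorem half_lt_half_of_lt_of_odd {i j : Fin (2 * n)} (h : i < j) (hi : i.val % 2 = 1) :
    half i < half j := by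
  simp only [Fin.lt_def, val_half] at h ⊢
  omega

theorem lt_of_half_lt_half {i j : Fin (2 * n)} (h : half i < half j) : i < j := by
  simp only [Fin.lt_def, val_half] at h ⊢
  omega

theorem Jbar_val (i : Fin (2 * n)) : (Jbar n i).val = 2 * (i.val / 2) + (1 - i.val % 2) := rfl

theorem half_Jbar (i : Fin (2 * n)) : half (Jbar n i) = half i :=
  Fin.ext (by simp only [val_half, Jbar_val]; omega)

theorem isFPF.card_openers_eq (hι : isFPF ι) : #(openers ι) = n := by
  have := hι.card_openers
  omega

def isFPF.opener (hι : isFPF ι) : Fin n ↪o Fin (2 * n) :=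
  (openers ι).orderEmbOfFin hι.card_openers_eq

theorem isFPF.opener_mem (hι : isFPF ι) (k : Fin n) : hι.opener k ∈ openers ι :=
  orderEmbOfFin_mem _ _ k

def isFPF.pairingFun (hι : isFPF ι) (i : Fin (2 * n)) : Fin (2 * n) :=
  if i.val % 2 = 0 then hι.opener (half i) else ι (hι.opener (half i))

theorem isFPF.pairingFun_mem_openers_iff (hι : isFPF ι) {i : Fin (2 * n)} :
    hι.pairingFun i ∈ openers ι ↔ i.val % 2 = 0 := by
  unfold pairingFun
  split_ifs with h
  · exact iff_of_true (hι.opener_mem _) h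
  · exact iff_of_false (hι.apply_mem_openers_iff.not_left.2 (hι.opener_mem _)) h

theorem isFPF.pairingFun_injective (hι : isFPF ι) : Function.Injective hι.pairingFun := by
  intro i j hij
  have hpar : i.val % 2 = j.val % 2 := by
    have := congrArg (· ∈ openers ι) hij
    simp only [hι.pairingFun_mem_openers_iff, eq_iff_iff] at this
    omega
  have hhalf : half i = half j := by
    unfold pairingFun at hij
    split_ifs at hij
    · exact hι.opener.injective hij
    · omega
    · omega
    · exact hι.opener.injective (ι.injective hij)
  have := congrArg Fin.val hhalf
  simp only [val_half] at this
  omega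

noncomputable def isFPF.pairing (hι : isFPF ι) : Equiv.Perm (Fin (2 * n)) :=
  Equiv.ofBijective hι.pairingFun hι.pairingFun_injective.bijective_of_finite

theorem isFPF.pairing_of_even (hι : isFPF ι) {i : Fin (2 * n)} (hi : i.val % 2 = 0) :
    hι.pairing i = hι.opener (half i) := if_pos hi

theorem isFPF.pairing_of_odd (hι : isFPF ι) {i : Fin (2 * n)} (hi : i.val % 2 = 1) :
    hι.pairing i = ι (hι.opener (half i)) := if_neg (by omega)

theorem isFPF.apply_pairing_of_odd (hι : isFPF ι) {i : Fin (2 * n)} (hi : i.val % 2 = 1) :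
    ι (hι.pairing i) = hι.opener (half i) := by
  rw [hι.pairing_of_odd hi, hι.apply_apply]

theorem isFPF.pairing_mem_openers_iff (hι : isFPF ι) {i : Fin (2 * n)} :
    hι.pairing i ∈ openers ι ↔ i.val % 2 = 0 :=
  hι.pairingFun_mem_openers_iff

theorem isFPF.apply_pairing_mem_openers_iff (hι : isFPF ι) {i : Fin (2 * n)} :
    ι (hι.pairing i) ∈ openers ι ↔ i.val % 2 = 1 := by
  rw [hι.apply_mem_openers_iff, hι.pairing_mem_openers_iff]
  omega

theorem isFPF.opener_half_le_pairing (hι : isFPF ι) (i : Fin (2 * n)) :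
    hι.opener (half i) ≤ hι.pairing i := by
  rcases Nat.mod_two_eq_zero_or_one i.val with hi | hi
  · exact (hι.pairing_of_even hi).ge
  · exact (hι.pairing_of_odd hi).ge.trans' (mem_openers.1 (hι.opener_mem _)).le

theorem isFPF.odd_of_pairing_lt (hι : isFPF ι) {i j : Fin (2 * n)} (hij : i < j)
    (h : hι.pairing j < hι.pairing i) : i.val % 2 = 1 := by
  by_contra hi
  rw [hι.pairing_of_even (i := i) (by omega)] at h
  exact (h.trans_le (hι.opener.monotone (half_mono hij.le))).not_ge (hι.opener_half_le_pairing j)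

theorem isFPF.pairing_mul_Jbar (hι : isFPF ι) : hι.pairing * Jbar n = ι * hι.pairing := by
  ext i : 1
  rw [Equiv.Perm.mul_apply, Equiv.Perm.mul_apply]
  rcases Nat.mod_two_eq_zero_or_one i.val with hi | hi
  · have hJ : (Jbar n i).val % 2 = 1 := by rw [Jbar_val]; omega
    rw [hι.pairing_of_odd hJ, hι.pairing_of_even hi, half_Jbar]
  · have hJ : (Jbar n i).val % 2 = 0 := by rw [Jbar_val]; omega
    rw [hι.pairing_of_even hJ, hι.apply_pairing_of_odd hi, half_Jbar]

theorem isFPF.card_filter_inversions_pairing_even (hι : isFPF ι) :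
    #((inversions hι.pairing).filter fun p => p.2.val % 2 = 0) = #(overlapPairs ι) := by
  refine card_equiv ((hι.pairing.trans ι).prodCongr hι.pairing) fun ⟨i, j⟩ => ?_
  simp only [mem_filter, mem_inversions, mem_overlapPairs, Equiv.prodCongr_apply, Prod.map,
    Equiv.trans_apply, hι.apply_apply]
  constructor
  · rintro ⟨⟨hij, hlt⟩, hj⟩
    have hi := hι.odd_of_pairing_lt hij hlt
    rw [hι.pairing_of_even hj] at hlt ⊢
    rw [hι.apply_pairing_of_odd hi]
    exact ⟨hι.opener.lt_iff_lt.2 (half_lt_half_of_lt_of_odd hij hi), hlt,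
      mem_openers.1 (hι.opener_mem _)⟩
  · rintro ⟨h1, h2, h3⟩
    have hj : j.val % 2 = 0 := hι.pairing_mem_openers_iff.1 (mem_openers.2 h3)
    have hi : i.val % 2 = 1 :=
      hι.apply_pairing_mem_openers_iff.1
        (mem_openers.2 (by rw [hι.apply_apply]; exact h1.trans h2))
    rw [hι.apply_pairing_of_odd hi, hι.pairing_of_even hj, hι.opener.lt_iff_lt] at h1
    exact ⟨⟨lt_of_half_lt_half h1, h2⟩, hj⟩

theorem isFPF.card_filter_inversions_pairing_odd (hι : isFPF ι) :
    #((inversions hι.pairing).filter fun p => ¬p.2.val % 2 = 0) = nestings ι := by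
  rw [nestings]
  refine card_equiv ((hι.pairing.trans ι).prodCongr (hι.pairing.trans ι)) fun ⟨i, j⟩ => ?_
  simp only [mem_filter, mem_inversions, mem_univ, true_and, Equiv.prodCongr_apply, Prod.map,
    Equiv.trans_apply, hι.apply_apply]
  constructor
  · rintro ⟨⟨hij, hlt⟩, hj⟩
    have hi := hι.odd_of_pairing_lt hij hlt
    replace hj : j.val % 2 = 1 := by omega
    refine ⟨?_, ?_, hlt⟩
    · rw [hι.apply_pairing_of_odd hi, hι.apply_pairing_of_odd hj]
      exact hι.opener.lt_iff_lt.2 (half_lt_half_of_lt_of_odd hij hi)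
    · simpa [hι.apply_apply] using hι.apply_pairing_mem_openers_iff.2 hj
  · rintro ⟨h1, h2, h3⟩
    have hj : j.val % 2 = 1 :=
      hι.apply_pairing_mem_openers_iff.1 (mem_openers.2 (by rwa [hι.apply_apply]))
    have hi : i.val % 2 = 1 :=
      hι.apply_pairing_mem_openers_iff.1
        (mem_openers.2 (by rw [hι.apply_apply]; exact h1.trans (h2.trans h3)))
    rw [hι.apply_pairing_of_odd hi, hι.apply_pairing_of_odd hj, hι.opener.lt_iff_lt] at h1
    exact ⟨⟨lt_of_half_lt_half h1, h3⟩, by omega⟩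

theorem isFPF.invLength_pairing (hι : isFPF ι) :
    invLength hι.pairing = #(overlapPairs ι) + nestings ι := by
  rw [invLength_eq_card_inversions, ← card_filter_add_card_filter_not (fun p => p.2.val % 2 = 0),
    hι.card_filter_inversions_pairing_even, hι.card_filter_inversions_pairing_odd]

end Pairing

theorem isFPF_Jbar (n : ℕ) : isFPF (Jbar n) := by
  refine ⟨Equiv.ext fun i => Fin.ext ?_, fun i h => ?_⟩
  · simp only [Equiv.Perm.mul_apply, Equiv.Perm.one_apply, Jbar_val]
    omega
  · have := congrArg Fin.val h
    rw [Jbar_val] at this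
    omega

theorem overlapPairs_Jbar (n : ℕ) : overlapPairs (Jbar n) = ∅ := by
  refine eq_empty_of_forall_notMem fun p hp => ?_
  simp only [mem_overlapPairs, Fin.lt_def, Jbar_val] at hp
  omega

theorem nestings_Jbar (n : ℕ) : nestings (Jbar n) = 0 := by
  refine card_eq_zero.2 (filter_eq_empty_iff.2 fun p _ hp => ?_)
  simp only [Fin.lt_def, Jbar_val] at hp
  omega

theorem invLength_Jbar (n : ℕ) : invLength (Jbar n) = n := by
  rw [(isFPF_Jbar n).invLength_eq, (isFPF_Jbar n).card_openers_eq, overlapPairs_Jbar,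
    nestings_Jbar, card_empty]
  rfl

/-- the set `{w : w⁻¹ ∘ J̄ₙ ∘ w = ι}` is nonempty and the minimum of
`l(w)` over it equals `c(ι) + 2·r(ι) = (l(ι) − n)/2`. -/
theorem min_length_conjugator {n : ℕ} (ι : Equiv.Perm (Fin (2*n))) (hι : isFPF ι) :
    ∃ w : Equiv.Perm (Fin (2*n)), w⁻¹ * Jbar n * w = ι ∧
      invLength w = crossings ι + 2 * nestings ι ∧
      (∀ v : Equiv.Perm (Fin (2*n)), v⁻¹ * Jbar n * v = ι → invLength w ≤ invLength v) ∧
      2 * invLength w + n = invLength ι := by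
  have hlen_ι := hι.invLength_eq
  have hlen_w := hι.invLength_pairing
  rw [hι.card_openers_eq] at hlen_ι
  rw [card_overlapPairs] at hlen_ι hlen_w
  refine ⟨hι.pairing⁻¹, ?_, ?_, fun v hv => ?_, ?_⟩
  · rw [inv_inv, hι.pairing_mul_Jbar, mul_inv_cancel_right]
  · rw [invLength_inv]
    omega
  · have hlower := invLength_conj_le (Jbar n) v
    rw [hv, invLength_Jbar] at hlower
    rw [invLength_inv]
    omega
  · rw [invLength_inv]
    omega
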